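/- arXiv:1904.11334 — 9 statements merged into one kernel-verified Lean document; each statement's English description precedes it below -/
import Mathlib

section
/- (Structure theorem for HV-palindromes, even-by-even case.) A 2D word w of size (2a,2b) over an alphabet Σ is an HV-palindrome if and only if there exists an a×b matrix u over Σ such that for all 1 ≤ i ≤ 2a and 1 ≤ j ≤ 2b, w_{i,j} = u_{ρ(i),γ(j)}, where ρ(i) = i if i ≤ a and ρ(i) = 2a+1−i otherwise, and γ(j) = j if j ≤ b and γ(j) = 2b+1−j otherwise; equivalently, w is the block matrix with top-left block u, top-right block u with columns reversed, bottom-left block u with rows reversed, and bottom-right block u with both rows and columns reversed. -/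
/-- A 2D word is an HV-palindrome if every row and every column is a palindrome. -/
def IsHVPal {A : Type*} {m n : ℕ} (w : Fin m → Fin n → A) : Prop :=
  (∀ i j, w i j = w i j.rev) ∧ (∀ i j, w i j = w i.rev j)

/-- structure theorem, even-by-even case: a word of size `(2a,2b)` is an
HV-palindrome iff it arises from an `a × b` matrix `u` by reflecting the indices:
`w i j = u (ρ i) (γ j)` where `ρ i = i` if `i < a` and `2a-1-i` otherwise (0-indexed),
and similarly for `γ`. -/
theorem stmt_1 {A : Type*} (a b : ℕ) (w : Fin (2*a) → Fin (2*b) → A) :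
    IsHVPal w ↔
      ∃ u : Fin a → Fin b → A, ∀ (i : Fin (2*a)) (j : Fin (2*b)),
        w i j = u (if h : (i : ℕ) < a then ⟨i, h⟩
                   else ⟨2*a - 1 - i, by have := i.isLt; omega⟩)
                  (if h : (j : ℕ) < b then ⟨j, h⟩
                   else ⟨2*b - 1 - j, by have := j.isLt; omega⟩) := by
  constructor
  · rintro ⟨hr, hc⟩
    refine ⟨fun i j => w ⟨i, by have := i.isLt; omega⟩ ⟨j, by have := j.isLt; omega⟩,
      fun i j => ?_⟩
    have key : ∀ (i : Fin (2*a)) (j : Fin (2*b)) (i' : Fin (2*a)) (j' : Fin (2*b)),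
        ((i':ℕ) = i ∨ (i':ℕ) = 2*a - 1 - i) → ((j':ℕ) = j ∨ (j':ℕ) = 2*b - 1 - j) →
        w i j = w i' j' := by
      intro i j i' j' hi hj
      have hrev : ∀ (k : Fin (2*a)), (k.rev : ℕ) = 2*a - 1 - k := by
        intro k; simp [Fin.rev]; omega
      have hrev' : ∀ (k : Fin (2*b)), (k.rev : ℕ) = 2*b - 1 - k := by
        intro k; simp [Fin.rev]; omega
      rcases hi with hi | hi <;> rcases hj with hj | hj
      · rw [show i' = i from Fin.ext hi, show j' = j from Fin.ext hj]
      · rw [hr i j, show i' = i from Fin.ext hi,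
          show j' = j.rev from Fin.ext (by rw [hrev']; omega)]
      · rw [hc i j, show i' = i.rev from Fin.ext (by rw [hrev]; omega),
          show j' = j from Fin.ext hj]
      · rw [hr i j, hc i j.rev, show i' = i.rev from Fin.ext (by rw [hrev]; omega),
          show j' = j.rev from Fin.ext (by rw [hrev']; omega)]
    by_cases hi : (i : ℕ) < a <;> by_cases hj : (j : ℕ) < b <;>
      simp only [hi, hj, dif_pos, dif_neg, not_lt] <;>
      exact key i j _ _ (by simp) (by simp)
  · rintro ⟨u, hu⟩
    have hrev : ∀ (k : Fin (2*a)), (k.rev : ℕ) = 2*a - 1 - k := by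
      intro k; simp [Fin.rev]; omega
    have hrev' : ∀ (k : Fin (2*b)), (k.rev : ℕ) = 2*b - 1 - k := by
      intro k; simp [Fin.rev]; omega
    constructor
    · intro i j
      rw [hu i j, hu i j.rev]
      congr 1
      by_cases hj : (j : ℕ) < b
      · have : ¬ ((j.rev : ℕ) < b) := by rw [hrev']; have := j.isLt; omega
        rw [dif_pos hj, dif_neg this]
        exact Fin.ext (by simp [hrev']; omega)
      · have : (j.rev : ℕ) < b := by rw [hrev']; have := j.isLt; omega
        rw [dif_neg hj, dif_pos this]
        exact Fin.ext (by simp [hrev']; omega)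
    · intro i j
      rw [hu i j, hu i.rev j]
      congr 1
      by_cases hi : (i : ℕ) < a
      · have : ¬ ((i.rev : ℕ) < a) := by rw [hrev]; have := i.isLt; omega
        rw [dif_pos hi, dif_neg this]
        exact Fin.ext (by simp [hrev]; omega)
      · have : (i.rev : ℕ) < a := by rw [hrev]; have := i.isLt; omega
        rw [dif_neg hi, dif_pos this]
        exact Fin.ext (by simp [hrev]; omega)
end

section
/- Let w be a 2D word over an alphabet Σ. Every 2D palindromic factor of w is an HV-palindrome if and only if w has no factor z of size (r,s) with r ≥ 2 and s ≥ 2 satisfying all of the following: z_{1,1} ≠ z_{1,s}; the last row of z is the reverse of the first row of z (z_{r,j} = z_{1,s+1−j} for all j); the last column of z is the reverse of the first column of z (z_{i,s} = z_{r+1−i,1} for all i); and the interior block [z_{i,j}]_{2 ≤ i ≤ r−1, 2 ≤ j ≤ s−1} is a 2D palindrome (this interior condition is vacuous when r = 2 or s = 2). -/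
/-- A 2D word `w` is a 2D palindrome if it equals its reverse. -/
def IsPal2D {A : Type*} {m n : ℕ} (w : Fin m → Fin n → A) : Prop :=
  ∀ i j, w i j = w i.rev j.rev

/-- `p` is a factor (sub-array) of `w`. -/
def IsFactor {A : Type*} {k l m n : ℕ} (p : Fin k → Fin l → A)
    (w : Fin m → Fin n → A) : Prop :=
  ∃ r c, ∃ (h1 : r + k ≤ m) (h2 : c + l ≤ n),
    ∀ (i : Fin k) (j : Fin l),
      p i j = w ⟨r + i, by have := i.isLt; omega⟩ ⟨c + j, by have := j.isLt; omega⟩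

/-!
A 2D palindrome `p` that is not an HV-palindrome has some row that is not a palindrome, say
`p a b ≠ p a b.rev`; the central symmetry of `p` lets us move `(a, b)` into the upper-left
quadrant. Peeling `a` rows and `b` columns off every side of `p` leaves a centred block, again a
2D palindrome, whose top corners are `p a b` and `p a b.rev`. Conversely, the border and interior
conditions on an obstruction `z` say exactly that `z` is a 2D palindrome, while `z_{1,1} ≠ z_{1,s}`
says that its first row is not a palindrome. -/

section

variable {A : Type*}

theorem Fin.rev_mk_zero {n : ℕ} (h : 0 < n) : (⟨0, h⟩ : Fin n).rev = ⟨n - 1, by omega⟩ :=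
  Fin.ext (by rw [Fin.val_rev])

def subBlock {k l : ℕ} (p : Fin k → Fin l → A) (r c m n : ℕ) (hr : r + m ≤ k)
    (hc : c + n ≤ l) : Fin m → Fin n → A :=
  fun i j => p ⟨r + i, by have := i.isLt; omega⟩ ⟨c + j, by have := j.isLt; omega⟩

theorem isFactor_subBlock {k l : ℕ} (p : Fin k → Fin l → A) (r c m n : ℕ) (hr : r + m ≤ k)
    (hc : c + n ≤ l) : IsFactor (subBlock p r c m n hr hc) p :=
  ⟨r, c, hr, hc, fun _ _ => rfl⟩

theorem IsFactor.trans {k l k' l' m n : ℕ} {p : Fin k → Fin l → A} {q : Fin k' → Fin l' → A}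
    {w : Fin m → Fin n → A} (hpq : IsFactor p q) (hqw : IsFactor q w) : IsFactor p w := by
  obtain ⟨r, c, hr, hc, hp⟩ := hpq
  obtain ⟨r', c', hr', hc', hq⟩ := hqw
  refine ⟨r' + r, c' + c, by omega, by omega, fun i j => ?_⟩
  rw [hp, hq]
  simp only [Nat.add_assoc]

theorem IsPal2D.subBlock_center {k l : ℕ} {p : Fin k → Fin l → A} (hp : IsPal2D p) (a b : ℕ)
    (ha : 2 * a ≤ k) (hb : 2 * b ≤ l) :
    IsPal2D (subBlock p a b (k - 2 * a) (l - 2 * b) (by omega) (by omega)) := by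
  intro i j
  have hi := i.isLt
  have hj := j.isLt
  simp only [subBlock]
  rw [hp]
  congr 1 <;> ext <;> simp only [Fin.val_rev] <;> omega

theorem IsPal2D.apply_rev_left {k l : ℕ} {p : Fin k → Fin l → A} (hp : IsPal2D p) (i : Fin k)
    (j : Fin l) : p i.rev j = p i j.rev := by
  rw [hp, Fin.rev_rev]

theorem IsPal2D.exists_ne_rev_of_not_isHVPal {k l : ℕ} {p : Fin k → Fin l → A}
    (hp : IsPal2D p) (hHV : ¬ IsHVPal p) : ∃ a b, p a b ≠ p a b.rev := by
  by_contra! hrows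
  refine hHV ⟨hrows, fun i j => ?_⟩
  rw [hp.apply_rev_left, ← hrows]

theorem IsPal2D.exists_ne_rev_in_quadrant {k l : ℕ} {p : Fin k → Fin l → A} (hp : IsPal2D p)
    {a : Fin k} {b : Fin l} (hab : p a b ≠ p a b.rev) :
    ∃ (a : Fin k) (b : Fin l), 2 * (a : ℕ) + 2 ≤ k ∧ 2 * (b : ℕ) + 2 ≤ l ∧ p a b ≠ p a b.rev := by
  have hrow_symm : ∀ {a : Fin k} {b : Fin l}, p a b ≠ p a b.rev → p a b.rev ≠ p a b.rev.rev :=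
    fun h h' => h (by rw [h', Fin.rev_rev])
  have hcol_symm : ∀ {a : Fin k} {b : Fin l}, p a b ≠ p a b.rev → p a.rev b ≠ p a.rev b.rev :=
    fun h h' => h (by rw [← hp.apply_rev_left, h', hp.apply_rev_left, Fin.rev_rev])
  obtain ⟨b, hb, hab⟩ : ∃ b : Fin l, 2 * (b : ℕ) + 2 ≤ l ∧ p a b ≠ p a b.rev := by
    by_cases hb : 2 * (b : ℕ) + 2 ≤ l
    · exact ⟨b, hb, hab⟩
    · refine ⟨b.rev, ?_, hrow_symm hab⟩
      have hb' : b.rev ≠ b := fun h => hab (by rw [h])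
      rw [Ne, Fin.ext_iff, Fin.val_rev] at hb'
      rw [Fin.val_rev]
      omega
  by_cases ha : 2 * (a : ℕ) + 2 ≤ k
  · exact ⟨a, b, ha, hb, hab⟩
  · refine ⟨a.rev, b, ?_, hb, hcol_symm hab⟩
    have ha' : a.rev ≠ a := fun h => hcol_symm hab (by rw [h, ← hp.apply_rev_left, h])
    rw [Ne, Fin.ext_iff, Fin.val_rev] at ha'
    rw [Fin.val_rev]
    omega

theorem isPal2D_iff_border {r s : ℕ} (z : Fin r → Fin s → A) (hr : 0 < r) (hs : 0 < s) :
    IsPal2D z ↔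
      (∀ j : Fin s, z ⟨r - 1, by omega⟩ j = z ⟨0, hr⟩ j.rev) ∧
      (∀ i : Fin r, z i ⟨s - 1, by omega⟩ = z i.rev ⟨0, hs⟩) ∧
      (∀ (i : Fin r) (j : Fin s),
        0 < (i : ℕ) → (i : ℕ) < r - 1 → 0 < (j : ℕ) → (j : ℕ) < s - 1 →
        z i j = z i.rev j.rev) := by
  have hr0 : (⟨r - 1, by omega⟩ : Fin r).rev = ⟨0, hr⟩ := by rw [← Fin.rev_mk_zero, Fin.rev_rev]
  have hs0 : (⟨s - 1, by omega⟩ : Fin s).rev = ⟨0, hs⟩ := by rw [← Fin.rev_mk_zero, Fin.rev_rev]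
  refine ⟨fun hz => ⟨fun j => ?_, fun i => ?_, fun i j _ _ _ _ => hz i j⟩, ?_⟩
  · rw [hz, hr0]
  · rw [hz, hs0]
  rintro ⟨hrow, hcol, hint⟩ i j
  by_cases hi0 : (i : ℕ) = 0
  · rw [show i = ⟨0, hr⟩ from Fin.ext hi0, Fin.rev_mk_zero, hrow, Fin.rev_rev]
  by_cases hi1 : (i : ℕ) = r - 1
  · rw [show i = ⟨r - 1, by omega⟩ from Fin.ext hi1, hr0, hrow]
  by_cases hj0 : (j : ℕ) = 0
  · rw [show j = ⟨0, hs⟩ from Fin.ext hj0, Fin.rev_mk_zero, hcol, Fin.rev_rev]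
  by_cases hj1 : (j : ℕ) = s - 1
  · rw [show j = ⟨s - 1, by omega⟩ from Fin.ext hj1, hs0, hcol]
  exact hint i j (by omega) (by have := i.isLt; omega) (by omega) (by have := j.isLt; omega)

end

/-- every 2D palindromic factor of `w` is an HV-palindrome iff `w` has no
factor `z` of size `(r,s)`, `r,s ≥ 2`, with `z_{1,1} ≠ z_{1,s}`, last row the reverse of
the first row, last column the reverse of the first column, and palindromic interior. -/
theorem stmt_5 {A : Type*} (m n : ℕ) (w : Fin m → Fin n → A) :
    (∀ (k l : ℕ) (p : Fin k → Fin l → A), IsFactor p w → IsPal2D p → IsHVPal p) ↔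
    ¬ ∃ (r s : ℕ) (hr : 2 ≤ r) (hs : 2 ≤ s) (z : Fin r → Fin s → A),
        IsFactor z w ∧
        z ⟨0, by omega⟩ ⟨0, by omega⟩ ≠ z ⟨0, by omega⟩ ⟨s - 1, by omega⟩ ∧
        (∀ j : Fin s, z ⟨r - 1, by omega⟩ j = z ⟨0, by omega⟩ j.rev) ∧
        (∀ i : Fin r, z i ⟨s - 1, by omega⟩ = z i.rev ⟨0, by omega⟩) ∧
        (∀ (i : Fin r) (j : Fin s),
          0 < (i : ℕ) → (i : ℕ) < r - 1 → 0 < (j : ℕ) → (j : ℕ) < s - 1 →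
          z i j = z i.rev j.rev) := by
  constructor
  · rintro H ⟨r, s, hr, hs, z, hz, hcorner, hborder⟩
    have hpal : IsPal2D z := (isPal2D_iff_border z (by omega) (by omega)).2 hborder
    refine hcorner (((H r s z hz hpal).1 _ _).trans ?_)
    rw [Fin.rev_mk_zero]
  · intro H k l p hp hpal
    by_contra hHV
    obtain ⟨_, _, hdefect⟩ := hpal.exists_ne_rev_of_not_isHVPal hHV
    obtain ⟨a, b, ha, hb, hab⟩ := hpal.exists_ne_rev_in_quadrant hdefect
    have hcenter := hpal.subBlock_center a b (by omega) (by omega)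
    refine H ⟨k - 2 * a, l - 2 * b, by omega, by omega, _, (isFactor_subBlock ..).trans hp,
      ?_, (isPal2D_iff_border _ (by omega) (by omega)).1 hcenter⟩
    simp only [subBlock]
    convert hab using 2 <;> ext <;> simp only [Fin.val_rev] <;> omega
end

section
/- Every border of a 2D palindrome is a 2D palindrome. That is, if w is a 2D palindrome of size (m,n) and v is a nonempty 2D word of size (i,j) that is both a prefix of w (v_{k,l} = w_{k,l} for all k,l) and a suffix of w (v_{k,l} = w_{m−i+k, n−j+l} for all k,l), then v is a 2D palindrome. -/
/-- every border of a 2D palindrome is a 2D palindrome. -/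
theorem stmt_6 {A : Type*} (m n i j : ℕ) (hi0 : 1 ≤ i) (hj0 : 1 ≤ j)
    (hi : i ≤ m) (hj : j ≤ n)
    (w : Fin m → Fin n → A) (v : Fin i → Fin j → A)
    (hw : IsPal2D w)
    (hpre : ∀ (k : Fin i) (l : Fin j), v k l = w (Fin.castLE hi k) (Fin.castLE hj l))
    (hsuf : ∀ (k : Fin i) (l : Fin j),
      v k l = w ⟨m - i + k, by have := k.isLt; omega⟩
                ⟨n - j + l, by have := l.isLt; omega⟩) :
    IsPal2D v := by
  intro k l
  rw [hpre k l, hsuf k.rev l.rev, hw]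
  congr 1
  · apply Fin.ext
    simp [Fin.rev]
    have := k.isLt
    omega
  · apply Fin.ext
    simp [Fin.rev]
    have := l.isLt
    omega
end

section
/- Let w be a 2D word of size (m,n) with m,n ≥ 2, and let BOR(w) be the set of all borders of w. If w is a 2D palindrome, then 2 ≤ |BOR(w)| ≤ mn. If w is an HV-palindrome, then 4 ≤ |BOR(w)| ≤ mn. -/
/-- A finite 2D word over `A`: a pair of dimensions together with a matrix of letters. -/
def Word2D (A : Type*) := (k : ℕ) × (l : ℕ) × (Fin k → Fin l → A)

/-- `v` is a border of `w`: it is nonempty and occurs both as the prefix (top-left corner)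
and as the suffix (bottom-right corner) of `w`. -/
def IsBorder {A : Type*} {i j m n : ℕ} (v : Fin i → Fin j → A)
    (w : Fin m → Fin n → A) : Prop :=
  0 < i ∧ 0 < j ∧ ∃ (hi : i ≤ m) (hj : j ≤ n),
    (∀ k l, v k l = w (Fin.castLE hi k) (Fin.castLE hj l)) ∧
    (∀ (k : Fin i) (l : Fin j),
      v k l = w ⟨m - i + k, by have := k.isLt; omega⟩
                ⟨n - j + l, by have := l.isLt; omega⟩)

/-- The set of all borders of `w`, as distinct 2D words (of all sizes). -/
def BOR {A : Type*} {m n : ℕ} (w : Fin m → Fin n → A) : Set (Word2D A) :=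
  {p | IsBorder p.2.2 w}

/-! A border is determined by its size, since it is the top-left block of `w` of that size;
so `|BOR(w)|` is the number of border sizes, at most `mn`. Conversely, a size `(i, j)` is a
border size as soon as the top-left and bottom-right `i × j` blocks agree. For a 2D palindrome
this holds for `(1, 1)` (the two corner letters are swapped by the reversal) and `(m, n)`.
An HV-palindrome is a 2D palindrome, and its first and last rows, as well as its first and
last columns, coincide, which adds the sizes `(1, n)` and `(m, 1)`. -/

section Borders

variable {A : Type*} {m n : ℕ} (w : Fin m → Fin n → A)

def borderSizes : Set (ℕ × ℕ) :=
  (fun p : Word2D A => (p.1, p.2.1)) '' BOR w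

theorem injOn_size_BOR : Set.InjOn (fun p : Word2D A => (p.1, p.2.1)) (BOR w) := by
  rintro ⟨i, j, v⟩ ⟨-, -, _, _, hv, -⟩ ⟨i', j', v'⟩ ⟨-, -, _, _, hv', -⟩ h
  obtain ⟨rfl, rfl⟩ := Prod.mk.inj h
  obtain rfl : v = v' := funext₂ fun k l => (hv k l).trans (hv' k l).symm
  rfl

theorem ncard_borderSizes : (borderSizes w).ncard = (BOR w).ncard :=
  (injOn_size_BOR w).ncard_image

theorem borderSizes_subset_Icc_prod :
    borderSizes w ⊆ ↑(Finset.Icc 1 m ×ˢ Finset.Icc 1 n) := by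
  rintro _ ⟨p, ⟨hi0, hj0, hi, hj, -⟩, rfl⟩
  simp only [Finset.coe_product, Set.mem_prod, Finset.coe_Icc, Set.mem_Icc]
  omega

theorem ncard_BOR_le : (BOR w).ncard ≤ m * n := by
  rw [← ncard_borderSizes]
  calc (borderSizes w).ncard ≤ (↑(Finset.Icc 1 m ×ˢ Finset.Icc 1 n) : Set (ℕ × ℕ)).ncard :=
        Set.ncard_le_ncard (borderSizes_subset_Icc_prod w) (Finset.finite_toSet _)
    _ = m * n := by rw [Set.ncard_coe_finset, Finset.card_product]; simp

theorem card_le_ncard_BOR {S : Finset (ℕ × ℕ)} (hS : ↑S ⊆ borderSizes w) :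
    S.card ≤ (BOR w).ncard := by
  rw [← ncard_borderSizes, ← Set.ncard_coe_finset]
  exact Set.ncard_le_ncard hS ((Finset.finite_toSet _).subset (borderSizes_subset_Icc_prod w))

theorem mem_borderSizes_of_block_eq {i j : ℕ} (hi0 : 0 < i) (hj0 : 0 < j) (hi : i ≤ m)
    (hj : j ≤ n)
    (h : ∀ (k : Fin i) (l : Fin j), w (Fin.castLE hi k) (Fin.castLE hj l) =
      w ⟨m - i + k, by have := k.isLt; omega⟩ ⟨n - j + l, by have := l.isLt; omega⟩) :
    (i, j) ∈ borderSizes w :=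
  ⟨⟨i, j, fun k l => w (Fin.castLE hi k) (Fin.castLE hj l)⟩,
    ⟨hi0, hj0, hi, hj, fun _ _ => rfl, h⟩, rfl⟩

theorem size_mem_borderSizes (hm : 0 < m) (hn : 0 < n) : (m, n) ∈ borderSizes w :=
  mem_borderSizes_of_block_eq w hm hn le_rfl le_rfl fun k l => by
    congr 1 <;> ext <;> simp

variable {w}

theorem IsPal2D.one_one_mem_borderSizes (hw : IsPal2D w) (hm : 0 < m) (hn : 0 < n) :
    (1, 1) ∈ borderSizes w :=
  mem_borderSizes_of_block_eq w one_pos one_pos hm hn fun k l => by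
    rw [hw]
    congr 1 <;> ext <;> simp [Fin.val_rev]

theorem IsHVPal.isPal2D (hw : IsHVPal w) : IsPal2D w :=
  fun i j => (hw.1 i j).trans (hw.2 i j.rev)

theorem IsHVPal.one_size_mem_borderSizes (hw : IsHVPal w) (hm : 0 < m) (hn : 0 < n) :
    (1, n) ∈ borderSizes w :=
  mem_borderSizes_of_block_eq w one_pos hn hm le_rfl fun k l => by
    rw [hw.2]
    congr 1 <;> ext <;> simp [Fin.val_rev]

theorem IsHVPal.size_one_mem_borderSizes (hw : IsHVPal w) (hm : 0 < m) (hn : 0 < n) :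
    (m, 1) ∈ borderSizes w :=
  mem_borderSizes_of_block_eq w hm one_pos le_rfl hn fun k l => by
    rw [hw.1]
    congr 1 <;> ext <;> simp [Fin.val_rev]

end Borders

/-- for `w` of size `(m,n)`, `m,n ≥ 2`: if `w` is a 2D palindrome then
`2 ≤ |BOR(w)| ≤ mn`; if `w` is an HV-palindrome then `4 ≤ |BOR(w)| ≤ mn`. -/
theorem stmt_7 {A : Type*} (m n : ℕ) (hm : 2 ≤ m) (hn : 2 ≤ n)
    (w : Fin m → Fin n → A) :
    (IsPal2D w → 2 ≤ (BOR w).ncard ∧ (BOR w).ncard ≤ m * n) ∧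
    (IsHVPal w → 4 ≤ (BOR w).ncard ∧ (BOR w).ncard ≤ m * n) := by
  have hm0 : 0 < m := by omega
  have hn0 : 0 < n := by omega
  have hpal : IsPal2D w → 2 ≤ (BOR w).ncard := fun hw => by
    have hcard : ({(1, 1), (m, n)} : Finset (ℕ × ℕ)).card = 2 := by
      rw [Finset.card_pair]; simp; omega
    refine hcard ▸ card_le_ncard_BOR w ?_
    simp only [Finset.coe_insert, Finset.coe_singleton, Set.insert_subset_iff,
      Set.singleton_subset_iff]
    exact ⟨hw.one_one_mem_borderSizes hm0 hn0, size_mem_borderSizes w hm0 hn0⟩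
  refine ⟨fun hw => ⟨hpal hw, ncard_BOR_le w⟩, fun hw => ⟨?_, ncard_BOR_le w⟩⟩
  have hcard : ({(1, 1), (1, n), (m, 1), (m, n)} : Finset (ℕ × ℕ)).card = 4 := by
    rw [Finset.card_insert_of_notMem, Finset.card_insert_of_notMem, Finset.card_pair] <;>
      simp <;> omega
  refine hcard ▸ card_le_ncard_BOR w ?_
  simp only [Finset.coe_insert, Finset.coe_singleton, Set.insert_subset_iff,
    Set.singleton_subset_iff]
  exact ⟨hw.isPal2D.one_one_mem_borderSizes hm0 hn0, hw.one_size_mem_borderSizes hm0 hn0,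
    hw.size_one_mem_borderSizes hm0 hn0, size_mem_borderSizes w hm0 hn0⟩
end

section
/- Let w be a 2D word of size (m,n) with m,n ≥ 1, and let PALConj(w) denote the set of 2D palindromes in the conjugacy class of w. Then |PALConj(w)| ≤ 4 if m and n are both even; |PALConj(w)| ≤ 1 if m and n are both odd; and |PALConj(w)| ≤ 2 otherwise (one of m,n even and the other odd). -/
/-- The conjugate of `w` obtained by cyclically shifting rows by `r` and columns by `c`. -/
def shift2D {A : Type*} {m n : ℕ} (w : Fin m → Fin n → A) (r c : ℕ) :
    Fin m → Fin n → A :=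
  fun i j => w ⟨((i : ℕ) + r) % m, Nat.mod_lt _ (by have := i.isLt; omega)⟩
               ⟨((j : ℕ) + c) % n, Nat.mod_lt _ (by have := j.isLt; omega)⟩

/-- The set of 2D palindromes in the conjugacy class of `w`. -/
def PALConj {A : Type*} {m n : ℕ} (w : Fin m → Fin n → A) :
    Set (Fin m → Fin n → A) :=
  {v | (∃ r c, r < m ∧ c < n ∧ v = shift2D w r c) ∧ IsPal2D v}

/-!
Cyclic shifts are the translation action of the torus `G = ℤ/m × ℤ/n` on 2D words, and reversal
is `x ↦ -1 - x`. If `v` and `g +ᵥ v` are both palindromes, then `g +ᵥ v = -g +ᵥ v`, so `2 • g`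
stabilises `v`. Fixing one palindrome `v` in the class, every palindrome in it is therefore the
image of an element killed by doubling in `Q = G ⧸ Stab v`. In a finite abelian group the kernel
and the cokernel of doubling have the same size, so there are at most `[Q : 2Q] ≤ [G : 2G]` of
them, and `[G : 2G] = gcd(2, m) * gcd(2, n)` is the number of elements of order dividing 2 in `G`.
-/

open AddAction Finset

lemma AddMonoidHom.card_ker_eq_index_range {G : Type*} [AddGroup G] [Finite G] (f : G →+ G) :
    Nat.card f.ker = f.range.index := by
  have hker := f.ker.card_mul_index
  have hrange := f.range.card_mul_index
  rw [AddSubgroup.index_ker] at hker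
  exact Nat.eq_of_mul_eq_mul_left Nat.card_pos (by rw [hrange, mul_comm, hker])

lemma card_ker_nsmul_le_of_surjective {G Q : Type*} [AddCommGroup G] [AddCommGroup Q] [Finite G]
    {π : G →+ Q} (hπ : Function.Surjective π) (k : ℕ) :
    Nat.card (nsmulAddMonoidHom k : Q →+ Q).ker ≤ Nat.card (nsmulAddMonoidHom k : G →+ G).ker := by
  have : Finite Q := Finite.of_surjective π hπ
  rw [AddMonoidHom.card_ker_eq_index_range, AddMonoidHom.card_ker_eq_index_range,
    ← AddSubgroup.index_comap_of_surjective _ hπ]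
  refine AddSubgroup.index_antitone ?_
  rintro _ ⟨g, rfl⟩
  exact ⟨π g, by simp⟩

lemma card_ker_nsmul_prod (G H : Type*) [AddCommGroup G] [AddCommGroup H] (k : ℕ) :
    Nat.card (nsmulAddMonoidHom k : G × H →+ G × H).ker =
      Nat.card (nsmulAddMonoidHom k : G →+ G).ker * Nat.card (nsmulAddMonoidHom k : H →+ H).ker := by
  have : (nsmulAddMonoidHom k : G × H →+ G × H) =
      (nsmulAddMonoidHom k).prodMap (nsmulAddMonoidHom k) := by
    ext <;> simp
  rw [this, AddMonoidHom.ker_prodMap, Nat.card_congr (AddSubgroup.prodEquiv _ _).toEquiv,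
    Nat.card_prod]

instance Fin.isAddCyclic (m : ℕ) [NeZero m] : IsAddCyclic (Fin m) :=
  ⟨⟨1, fun x ↦ ⟨x.val, by
    change ((x.val : ℤ)) • (1 : Fin m) = x
    open Fin.CommRing in rw [natCast_zsmul, Nat.smul_one_eq_cast, Fin.cast_val_eq_self]⟩⟩⟩

lemma Fin.card_ker_two_nsmul_le (m : ℕ) [NeZero m] :
    Nat.card (nsmulAddMonoidHom 2 : Fin m →+ Fin m).ker ≤ 2 - m % 2 := by
  classical
  rcases Nat.even_or_odd' m with ⟨k, hk | hk⟩
  · calc Nat.card (nsmulAddMonoidHom 2 : Fin m →+ Fin m).ker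
        = #{x : Fin m | 2 • x = 0} := by
          rw [Nat.card_eq_fintype_card, Fintype.card_subtype]; simp [AddMonoidHom.mem_ker]
      _ ≤ 2 := IsAddCyclic.card_nsmul_eq_zero_le two_pos
      _ = 2 - m % 2 := by omega
  · have hbot : (nsmulAddMonoidHom 2 : Fin m →+ Fin m).ker = ⊥ := by
      refine (AddSubgroup.eq_bot_iff_forall _).2 fun x hx ↦ ?_
      rw [AddMonoidHom.mem_ker, nsmulAddMonoidHom_apply] at hx
      have hmx : (2 * k + 1) • x = 0 := by
        rw [← hk]; simpa using card_nsmul_eq_zero (x := x)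
      rwa [add_nsmul, one_nsmul, mul_nsmul, hx, nsmul_zero, zero_add] at hmx
    rw [hbot, AddSubgroup.card_bot]
    omega

section Shift

variable {A : Type*} {m n : ℕ} [NeZero m] [NeZero n]

abbrev shiftAction : AddAction (Fin m × Fin n) (Fin m → Fin n → A) where
  vadd g w i j := w (i + g.1) (j + g.2)
  zero_vadd w := by funext i j; change w (i + 0) (j + 0) = w i j; simp
  add_vadd g h w := by
    funext i j; change w (i + (g.1 + h.1)) (j + (g.2 + h.2)) = w (i + g.1 + h.1) (j + g.2 + h.2)
    simp only [add_assoc]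

attribute [local instance] shiftAction

lemma shiftAction_vadd_apply (g : Fin m × Fin n) (w : Fin m → Fin n → A) (i : Fin m) (j : Fin n) :
    (g +ᵥ w) i j = w (i + g.1) (j + g.2) := rfl

lemma shift2D_eq_vadd (w : Fin m → Fin n → A) (r c : ℕ) :
    shift2D w r c = (Fin.ofNat m r, Fin.ofNat n c) +ᵥ w := by
  funext i j
  rw [shiftAction_vadd_apply]
  unfold shift2D
  congr 1 <;> ext <;> simp [Fin.val_add]

lemma IsPal2D.vadd_eq_neg_vadd {v : Fin m → Fin n → A} (hv : IsPal2D v) {g : Fin m × Fin n}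
    (hg : IsPal2D (g +ᵥ v)) : g +ᵥ v = -g +ᵥ v := by
  funext i j
  rw [hg, shiftAction_vadd_apply, hv, Fin.rev_add, Fin.rev_add, Fin.rev_rev, Fin.rev_rev,
    shiftAction_vadd_apply, Prod.fst_neg, Prod.snd_neg, sub_eq_add_neg, sub_eq_add_neg]

lemma IsPal2D.two_nsmul_mem_stabilizer {v : Fin m → Fin n → A} (hv : IsPal2D v)
    {g : Fin m × Fin n} (hg : IsPal2D (g +ᵥ v)) : 2 • g ∈ stabilizer (Fin m × Fin n) v := by
  rw [mem_stabilizer_iff, two_nsmul, add_vadd, hv.vadd_eq_neg_vadd hg, vadd_neg_vadd]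

lemma ncard_palConj_le (w : Fin m → Fin n → A) :
    (PALConj w).ncard ≤ Nat.card (nsmulAddMonoidHom 2 : Fin m × Fin n →+ Fin m × Fin n).ker := by
  rcases (PALConj w).eq_empty_or_nonempty with hP | ⟨v, ⟨r₀, c₀, -, -, hv₀⟩, hv⟩
  · simp [hP]
  set Q := (Fin m × Fin n) ⧸ stabilizer (Fin m × Fin n) v
  have hsub : PALConj w ⊆
      ofQuotientStabilizer (Fin m × Fin n) v '' ((nsmulAddMonoidHom 2 : Q →+ Q).ker : Set Q) := by
    rintro _ ⟨⟨r, c, -, -, rfl⟩, hu⟩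
    set g : Fin m × Fin n := (Fin.ofNat m r, Fin.ofNat n c) - (Fin.ofNat m r₀, Fin.ofNat n c₀)
    have hgu : g +ᵥ v = shift2D w r c := by
      rw [hv₀, shift2D_eq_vadd, shift2D_eq_vadd, vadd_vadd, sub_add_cancel]
    refine ⟨g, ?_, by rw [ofQuotientStabilizer_mk, hgu]⟩
    rw [← hgu] at hu
    rw [SetLike.mem_coe, AddMonoidHom.mem_ker, nsmulAddMonoidHom_apply,
      ← QuotientAddGroup.mk_nsmul, QuotientAddGroup.eq_zero_iff]
    exact hv.two_nsmul_mem_stabilizer hu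
  calc (PALConj w).ncard ≤ _ := Set.ncard_le_ncard hsub (Set.toFinite _)
    _ ≤ ((nsmulAddMonoidHom 2 : Q →+ Q).ker : Set Q).ncard := Set.ncard_image_le (Set.toFinite _)
    _ = Nat.card (nsmulAddMonoidHom 2 : Q →+ Q).ker := (Nat.card_coe_set_eq _).symm
    _ ≤ _ := card_ker_nsmul_le_of_surjective (QuotientAddGroup.mk'_surjective _) 2

end Shift

/-- the number of 2D palindromes in the conjugacy class of a word of size
`(m,n)` is at most 4 if `m,n` are both even, at most 1 if both odd, at most 2 otherwise. -/
theorem stmt_10 {A : Type*} (m n : ℕ) (hm : 1 ≤ m) (hn : 1 ≤ n)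
    (w : Fin m → Fin n → A) :
    (m % 2 = 0 → n % 2 = 0 → (PALConj w).ncard ≤ 4) ∧
    (m % 2 = 1 → n % 2 = 1 → (PALConj w).ncard ≤ 1) ∧
    (m % 2 ≠ n % 2 → (PALConj w).ncard ≤ 2) := by
  have : NeZero m := ⟨by omega⟩
  have : NeZero n := ⟨by omega⟩
  have h : (PALConj w).ncard ≤ (2 - m % 2) * (2 - n % 2) := by
    grw [ncard_palConj_le, card_ker_nsmul_prod, Fin.card_ker_two_nsmul_le,
      Fin.card_ker_two_nsmul_le]
  rcases Nat.mod_two_eq_zero_or_one m with hm2 | hm2 <;>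
    rcases Nat.mod_two_eq_zero_or_one n with hn2 | hn2 <;>
    simp_all
end

section
/- Let w be a 2D word of size (2,n) over an alphabet Σ, with n ≥ 1. Then the number of distinct nonempty HV-palindromic factors of w is at most 2n. -/
/-- The set of distinct nonempty HV-palindromic factors of `w`. -/
def HVFactors {A : Type*} {m n : ℕ} (w : Fin m → Fin n → A) : Set (Word2D A) :=
  {p | 0 < p.1 ∧ 0 < p.2.1 ∧ IsHVPal p.2.2 ∧ IsFactor p.2.2 w}

/-- The set of distinct nonempty 2D palindromic factors of `w`. -/
def PalFactors {A : Type*} {m n : ℕ} (w : Fin m → Fin n → A) : Set (Word2D A) :=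
  {p | 0 < p.1 ∧ 0 < p.2.1 ∧ IsPal2D p.2.2 ∧ IsFactor p.2.2 w}
theorem Set.ncard_singleton_prod_union_le {α β : Type*} (a b : α) (s t : Set β) :
    ({a} ×ˢ s ∪ {b} ×ˢ t).ncard ≤ s.ncard + t.ncard :=
  (Set.ncard_union_le _ _).trans_eq (by simp only [Set.ncard_prod, Set.ncard_singleton, one_mul])

namespace List

variable {α : Type*}

def palInfixes (u : List α) : Set (List α) :=
  {s | s ≠ [] ∧ s.Palindrome ∧ s <:+: u}

theorem palInfixes_finite (u : List α) : (palInfixes u).Finite :=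
  u.sublists.finite_toSet.subset fun _ hs => mem_sublists.2 hs.2.2.sublist

@[simp]
theorem palInfixes_nil : palInfixes ([] : List α) = ∅ :=
  Set.eq_empty_of_forall_notMem fun _ hs => hs.1 (eq_nil_of_infix_nil hs.2.2)

theorem Palindrome.isPrefix_of_isSuffix {s t : List α} (hs : s.Palindrome) (ht : t.Palindrome)
    (h : s <:+ t) : s <+: t := by
  simpa only [hs.reverse_eq, ht.reverse_eq] using h.reverse

theorem Palindrome.isInfix_of_isSuffix_concat {s t v : List α} {a : α} (hs : s.Palindrome)
    (ht : t.Palindrome) (hsu : s <:+ v ++ [a]) (htu : t <:+ v ++ [a])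
    (hlt : s.length < t.length) : s <:+: v := by
  obtain ⟨r, rfl⟩ := hs.isPrefix_of_isSuffix ht (suffix_of_suffix_length_le hsu htu hlt.le)
  obtain ⟨r', b, rfl⟩ : ∃ r' b, r = r' ++ [b] := by
    simpa using r.eq_nil_or_concat.resolve_left (by rintro rfl; simp at hlt)
  obtain ⟨x, hx⟩ := htu
  have : x ++ s ++ r' ++ [b] = v ++ [a] := by simpa using hx
  exact ⟨x, r', (append_inj' this rfl).1⟩

theorem subsingleton_palInfixes_concat_diff (v : List α) (a : α) :
    (palInfixes (v ++ [a]) \ palInfixes v).Subsingleton := by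
  have isSuffix : ∀ s ∈ palInfixes (v ++ [a]) \ palInfixes v, s <:+ v ++ [a] :=
    fun s ⟨⟨hne, hp, hi⟩, hnew⟩ => (infix_concat_iff.1 hi).resolve_right fun h => hnew ⟨hne, hp, h⟩
  intro s hs t ht
  wlog hle : s.length ≤ t.length generalizing s t
  · exact (this ht hs (by omega)).symm
  rcases hle.lt_or_eq with hlt | heq
  · exact absurd ⟨hs.1.1, hs.1.2.1,
      hs.1.2.1.isInfix_of_isSuffix_concat ht.1.2.1 (isSuffix s hs) (isSuffix t ht) hlt⟩ hs.2
  · exact (suffix_of_suffix_length_le (isSuffix s hs) (isSuffix t ht) hle).eq_of_length heq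

theorem ncard_palInfixes_le (u : List α) : (palInfixes u).ncard ≤ u.length := by
  induction u using reverseRecOn with
  | nil => simp
  | append_singleton v a ih =>
    have hnew : (palInfixes (v ++ [a]) \ palInfixes v).ncard ≤ 1 :=
      have := ((palInfixes_finite (v ++ [a])).sdiff (t := palInfixes v)).to_subtype
      Set.ncard_le_one_iff_subsingleton.2 (subsingleton_palInfixes_concat_diff v a)
    calc (palInfixes (v ++ [a])).ncard
        ≤ (palInfixes (v ++ [a]) \ palInfixes v).ncard + (palInfixes v).ncard :=
          Set.ncard_le_ncard_sdiff_add_ncard _ _ (palInfixes_finite v)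
      _ ≤ (v ++ [a]).length := by simp only [length_append, length_singleton]; omega

theorem palindrome_ofFn {n : ℕ} {f : Fin n → α} (h : ∀ j, f j = f j.rev) :
    (ofFn f).Palindrome := by
  refine .of_reverse_eq (ext_getElem (by simp) fun i h₁ h₂ => ?_)
  simp only [length_reverse, length_ofFn] at h₁ h₂
  rw [getElem_reverse, List.getElem_ofFn, List.getElem_ofFn, h]
  congr 1
  ext
  simp only [Fin.val_rev, length_ofFn]
  omega

theorem ofFn_isInfix_ofFn {l n c : ℕ} {f : Fin l → α} {g : Fin n → α} (hc : c + l ≤ n)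
    (h : ∀ j : Fin l, f j = g ⟨c + j, by omega⟩) : ofFn f <:+: ofFn g := by
  have : ofFn f = ((ofFn g).drop c).take l := by
    apply ext_getElem (by simp; omega)
    intro i hi _
    simp only [length_ofFn] at hi
    simpa using h ⟨i, hi⟩
  rw [this]
  exact (take_prefix _ _).isInfix.trans (drop_suffix _ _).isInfix

end List

section HVPalindromes

variable {A : Type*} {k l m n : ℕ}

theorem IsFactor.exists_rows_isInfix {p : Fin k → Fin l → A} {w : Fin m → Fin n → A}
    (h : IsFactor p w) :
    ∃ r, ∃ hr : r + k ≤ m, ∀ i : Fin k, List.ofFn (p i) <:+: List.ofFn (w ⟨r + i, by omega⟩) := by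
  obtain ⟨r, c, hr, hc, hp⟩ := h
  exact ⟨r, hr, fun i => List.ofFn_isInfix_ofFn hc (hp i)⟩

theorem IsHVPal.palindrome_row {f : Fin k → Fin l → A} (hf : IsHVPal f) (i : Fin k) :
    (List.ofFn (f i)).Palindrome :=
  List.palindrome_ofFn (hf.1 i)

/-- With at most two rows, distinct row indices are exchanged by `Fin.rev`. -/
theorem IsHVPal.row_eq_of_le_two {f : Fin k → Fin l → A} (hf : IsHVPal f) (hk : k ≤ 2)
    (i i' : Fin k) : f i = f i' := by
  rcases eq_or_ne i i' with rfl | hne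
  · rfl
  obtain rfl : i' = i.rev := by
    ext; simp only [Fin.val_rev]; have := Fin.val_ne_of_ne hne; omega
  exact funext (hf.2 i)

def heightTopRow (p : Word2D A) : ℕ × List A :=
  (p.1, if h : 0 < p.1 then List.ofFn (p.2.2 ⟨0, h⟩) else [])

theorem heightTopRow_injOn :
    Set.InjOn heightTopRow {p : Word2D A | 0 < p.1 ∧ p.1 ≤ 2 ∧ IsHVPal p.2.2} := by
  rintro ⟨k, l, f⟩ ⟨hk, hk2, hf : IsHVPal f⟩ ⟨k', l', f'⟩ ⟨hk', -, hf' : IsHVPal f'⟩ h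
  simp only [heightTopRow, dif_pos hk, dif_pos hk', Prod.mk.injEq] at h
  obtain ⟨rfl, hrow⟩ := h
  obtain rfl : l = l' := by simpa using congrArg List.length hrow
  have htop : f ⟨0, hk⟩ = f' ⟨0, hk⟩ := List.ofFn_inj.1 hrow
  congr
  funext i
  rw [hf.row_eq_of_le_two hk2 i ⟨0, hk⟩, htop, hf'.row_eq_of_le_two hk2 ⟨0, hk⟩ i]

theorem hvFactors_subset (w : Fin m → Fin n → A) :
    HVFactors w ⊆ {p | 0 < p.1 ∧ p.1 ≤ m ∧ IsHVPal p.2.2} :=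
  fun _ ⟨hk, _, hf, _, _, hr, _⟩ => ⟨hk, by omega, hf⟩

theorem heightTopRow_mem_of_mem_hvFactors {w : Fin 2 → Fin n → A} {p : Word2D A}
    (hp : p ∈ HVFactors w) :
    heightTopRow p ∈ ({1} ×ˢ ((List.ofFn (w 0)).palInfixes ∪ (List.ofFn (w 1)).palInfixes) ∪
      {2} ×ˢ ((List.ofFn (w 0)).palInfixes ∩ (List.ofFn (w 1)).palInfixes) : Set (ℕ × List A)) := by
  obtain ⟨k, l, f⟩ := p
  obtain ⟨hk, hl, hf, hfac⟩ : 0 < k ∧ 0 < l ∧ IsHVPal f ∧ IsFactor f w := hp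
  obtain ⟨r, hr, hrows⟩ := hfac.exists_rows_isInfix
  have htop : ∀ i, List.ofFn (f ⟨0, hk⟩) <:+: List.ofFn (w i) →
      List.ofFn (f ⟨0, hk⟩) ∈ (List.ofFn (w i)).palInfixes :=
    fun i h => ⟨by simpa using hl.ne', hf.palindrome_row _, h⟩
  simp only [heightTopRow, dif_pos hk]
  obtain rfl | rfl : k = 1 ∨ k = 2 := by omega
  · refine .inl ⟨rfl, ?_⟩
    obtain rfl | rfl : r = 0 ∨ r = 1 := by omega
    exacts [.inl (htop 0 (hrows 0)), .inr (htop 1 (hrows 0))]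
  · obtain rfl : r = 0 := by omega
    refine .inr ⟨rfl, htop 0 (hrows 0), htop 1 ?_⟩
    rw [hf.row_eq_of_le_two le_rfl ⟨0, hk⟩ 1]
    exact hrows 1

end HVPalindromes

theorem stmt_11_general {A : Type*} (n : ℕ) (w : Fin 2 → Fin n → A) :
    (HVFactors w).ncard ≤ 2 * n := by
  set P : Fin 2 → Set (List A) := fun i => (List.ofFn (w i)).palInfixes
  have hP : ∀ i, (P i).Finite := fun i => List.palInfixes_finite _
  have hPcard : ∀ i, (P i).ncard ≤ n := fun i => by
    simpa using List.ncard_palInfixes_le (List.ofFn (w i))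
  calc (HVFactors w).ncard
      ≤ ({1} ×ˢ (P 0 ∪ P 1) ∪ {2} ×ˢ (P 0 ∩ P 1) : Set (ℕ × List A)).ncard :=
        Set.ncard_le_ncard_of_injOn heightTopRow (fun _ => heightTopRow_mem_of_mem_hvFactors)
          (heightTopRow_injOn.mono (hvFactors_subset w))
          (((Set.finite_singleton 1).prod ((hP 0).union (hP 1))).union
            ((Set.finite_singleton 2).prod ((hP 0).inter_of_left _)))
    _ ≤ (P 0 ∪ P 1).ncard + (P 0 ∩ P 1).ncard := Set.ncard_singleton_prod_union_le _ _ _ _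
    _ = (P 0).ncard + (P 1).ncard := Set.ncard_union_add_ncard_inter _ _ (hP 0) (hP 1)
    _ ≤ 2 * n := by linarith [hPcard 0, hPcard 1]

/-- a 2D word of size `(2,n)` has at most `2n` distinct nonempty
HV-palindromic factors. -/
theorem stmt_11 {A : Type*} (n : ℕ) (hn : 1 ≤ n) (w : Fin 2 → Fin n → A) :
    (HVFactors w).ncard ≤ 2 * n :=
  stmt_11_general n w
end

section
/- Let w be a 2D word of size (m,n) with m,n ≥ 2 and let c be a 2D word of size (m,1) (a single column). Then the number of distinct 2D palindromic factors of w ⦶ c (the word of size (m,n+1) obtained by appending column c to w) that are not factors of w is at most m(m+1)/2. The same bound holds with 'HV-palindromic' in place of '2D palindromic'. -/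
/-- Column concatenation `u ⦶ v` of two 2D words with the same number of rows. -/
def hcat {A : Type*} {m n₁ n₂ : ℕ} (u : Fin m → Fin n₁ → A) (v : Fin m → Fin n₂ → A) :
    Fin m → Fin (n₁ + n₂) → A :=
  fun i => Fin.append (u i) (v i)

/-- occurrence at a fixed position -/
def FactorAt {A : Type*} {k l m n : ℕ} (p : Fin k → Fin l → A)
    (w : Fin m → Fin n → A) (r c : ℕ) : Prop :=
  ∃ (h1 : r + k ≤ m) (h2 : c + l ≤ n),
    ∀ (i : Fin k) (j : Fin l),
      p i j = w ⟨r + i, by have := i.isLt; omega⟩ ⟨c + j, by have := j.isLt; omega⟩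

lemma tri_card (m : ℕ) :
    (((Finset.range m) ×ˢ (Finset.range m)).filter fun p => p.1 + p.2 < m).card
      = m * (m + 1) / 2 := by
  classical
  rw [Finset.card_filter, Finset.sum_product]
  have h1 : ∀ r ∈ Finset.range m,
      (∑ k ∈ Finset.range m, if r + k < m then 1 else 0) = m - r := by
    intro r hr
    rw [← Finset.card_filter]
    have : (Finset.range m).filter (fun k => r + k < m) = Finset.range (m - r) := by
      ext x; simp only [Finset.mem_filter, Finset.mem_range]; omega
    rw [this, Finset.card_range]
  rw [Finset.sum_congr rfl h1]
  have h2 : ∑ r ∈ Finset.range m, (m - r) = ∑ r ∈ Finset.range m, (r + 1) := by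
    rw [← Finset.sum_range_reflect (fun i => i + 1) m]
    apply Finset.sum_congr rfl
    intro x hx; simp only [Finset.mem_range] at hx; omega
  rw [h2]
  have h3 : ∑ r ∈ Finset.range m, (r + 1) = ∑ r ∈ Finset.range (m + 1), r := by
    rw [Finset.sum_range_succ']
    simp
  rw [h3, Finset.sum_range_id]
  simp [Nat.mul_comm]

lemma hcat_left {A : Type*} {m n : ℕ} (w : Fin m → Fin n → A) (c : Fin m → Fin 1 → A)
    (i : Fin m) (j : ℕ) (hj : j < n) (hj' : j < n + 1) :
    hcat w c i ⟨j, hj'⟩ = w i ⟨j, hj⟩ := by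
  simp [hcat, Fin.append, Fin.addCases, hj]

/-- the key abstract lemma -/
lemma main_bound {A : Type*} (m n : ℕ) (hm : 2 ≤ m)
    (w : Fin m → Fin n → A) (c : Fin m → Fin 1 → A)
    (P : ∀ {k l : ℕ}, (Fin k → Fin l → A) → Prop)
    (hP : ∀ {k l L : ℕ} (p : Fin k → Fin l → A) (q : Fin k → Fin L → A),
      P p → P q → ∀ (hl : l ≤ L),
      (∀ (i : Fin k) (j : Fin l), p i j = q i ⟨L - l + j, by have := j.isLt; omega⟩) →
      ∀ (i : Fin k) (j : Fin l), p i j = q i ⟨j, by have := j.isLt; omega⟩) :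
    ({p : Word2D A | (0 < p.1 ∧ 0 < p.2.1 ∧ P p.2.2 ∧ IsFactor p.2.2 (hcat w c))
        ∧ ¬ IsFactor p.2.2 w}).ncard ≤ m * (m + 1) / 2 := by
  classical
  set W := hcat w c with hWdef
  set S : Set (Word2D A) := {p : Word2D A |
      (0 < p.1 ∧ 0 < p.2.1 ∧ P p.2.2 ∧ IsFactor p.2.2 W) ∧ ¬ IsFactor p.2.2 w} with hS
  -- every p in S occurs ending at the last column
  have hOcc : ∀ p ∈ S, {r : ℕ | FactorAt p.2.2 W r (n + 1 - p.2.1)}.Nonempty := by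
    intro p hp
    obtain ⟨⟨hk, hl, hPp, r, cc, h1, h2, hocc⟩, hnf⟩ := hp
    have hcl : cc + p.2.1 = n + 1 := by
      by_contra hne
      apply hnf
      refine ⟨r, cc, h1, by omega, ?_⟩
      intro i j
      rw [hocc i j]
      exact hcat_left w c ⟨r + ↑i, by have := i.isLt; omega⟩ (cc + ↑j)
        (by have := j.isLt; omega) (by have := j.isLt; omega)
    have hcc : cc = n + 1 - p.2.1 := by omega
    exact ⟨r, hcc ▸ ⟨h1, h2, hocc⟩⟩
  -- the map
  set f : Word2D A → ℕ × ℕ :=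
    fun p => (sInf {r : ℕ | FactorAt p.2.2 W r (n + 1 - p.2.1)}, p.1 - 1) with hf
  set T : Finset (ℕ × ℕ) :=
    ((Finset.range m) ×ˢ (Finset.range m)).filter fun q => q.1 + q.2 < m with hT
  have hmem : ∀ p ∈ S, FactorAt p.2.2 W (f p).1 (n + 1 - p.2.1) := by
    intro p hp
    exact Nat.sInf_mem (hOcc p hp)
  -- the key exclusion: no strictly narrower new P-factor at the same rows
  have hexcl : ∀ p ∈ S, ∀ p' ∈ S, p.1 = p'.1 → ∀ r : ℕ,
      FactorAt p.2.2 W r (n + 1 - p.2.1) → FactorAt p'.2.2 W r (n + 1 - p'.2.1) →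
      p.2.1 < p'.2.1 → False := by
    rintro ⟨k, l, g⟩ hp ⟨k', l', g'⟩ hp' hkk r hF hF' hll
    simp only at hkk hll hF hF' ⊢
    subst hkk
    obtain ⟨h1, h2, hocc⟩ := hF
    obtain ⟨h1', h2', hocc'⟩ := hF'
    have hl'n : l' ≤ n + 1 := by omega
    have hln : l ≤ n + 1 := by omega
    -- g occurs inside g' at its right end
    have hinq : ∀ (i : Fin k) (j : Fin l),
        g i j = g' i ⟨l' - l + j, by have := j.isLt; omega⟩ := by
      intro i j
      rw [hocc i j, hocc' i ⟨l' - l + j, by have := j.isLt; omega⟩]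
      congr 1
      apply Fin.ext
      simp only
      have := j.isLt
      omega
    have hPg : P g := hp.1.2.2.1
    have hPg' : P g' := hp'.1.2.2.1
    have hleft := hP g g' hPg hPg' (le_of_lt hll) hinq
    -- hence g occurs in w
    apply hp.2
    refine ⟨r, n + 1 - l', h1, show n + 1 - l' + l ≤ n by omega, ?_⟩
    intro i j
    have hi : (i : ℕ) < k := i.isLt
    have hj : (j : ℕ) < l := j.isLt
    show g i j = _
    rw [hleft i j, hocc' i ⟨j, by omega⟩]
    exact hcat_left w c ⟨r + ↑i, by omega⟩ (n + 1 - l' + ↑j)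
      (by omega) (by omega)
  have hmaps : ∀ p ∈ S, f p ∈ (T : Set (ℕ × ℕ)) := by
    intro p hp
    obtain ⟨h1, h2, -⟩ := hmem p hp
    have hk : 0 < p.1 := hp.1.1
    simp only [hf, hT, Finset.coe_filter, Set.mem_setOf_eq, Finset.mem_product,
      Finset.mem_range]
    simp only [hf] at h1
    refine ⟨⟨by omega, by omega⟩, by omega⟩
  have hinj : Set.InjOn f S := by
    rintro p hp p' hp' heq
    have hk : p.1 = p'.1 := by
      have h1 : 0 < p.1 := hp.1.1
      have h2 : 0 < p'.1 := hp'.1.1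
      have := congrArg Prod.snd heq
      simp only [hf] at this
      omega
    have hr : sInf {r : ℕ | FactorAt p.2.2 W r (n + 1 - p.2.1)}
        = sInf {r : ℕ | FactorAt p'.2.2 W r (n + 1 - p'.2.1)} :=
      congrArg Prod.fst heq
    have hm1 := hmem p hp
    have hm2 := hmem p' hp'
    rw [show (f p).1 = (f p').1 from congrArg Prod.fst heq] at hm1
    -- rule out l < l' and l' < l
    have hll : p.2.1 = p'.2.1 := by
      rcases Nat.lt_trichotomy p.2.1 p'.2.1 with h | h | h
      · exact absurd (hexcl p hp p' hp' hk _ hm1 hm2 h) (by simp)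
      · exact h
      · exact absurd (hexcl p' hp' p hp hk.symm _ hm2 hm1 h) (by simp)
    -- now equal occurrences force equality
    obtain ⟨k, l, g⟩ := p
    obtain ⟨k', l', g'⟩ := p'
    simp only at hk hll
    subst hk; subst hll
    obtain ⟨ha1, ha2, hocc⟩ := hm1
    obtain ⟨hb1, hb2, hocc'⟩ := hm2
    have hgg : g = g' := by
      funext i j
      have e1 := hocc i j
      have e2 := hocc' i j
      simp only at e1 e2
      rw [e1]
      exact e2.symm
    rw [hgg]
  have := Set.ncard_le_ncard_of_injOn f hmaps hinj (T.finite_toSet)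
  rwa [Set.ncard_coe_finset, tri_card] at this


lemma pal2d_shift {A : Type*} {k l L : ℕ} (p : Fin k → Fin l → A) (q : Fin k → Fin L → A)
    (hp : IsPal2D p) (hq : IsPal2D q) (hl : l ≤ L)
    (hocc : ∀ (i : Fin k) (j : Fin l), p i j = q i ⟨L - l + j, by have := j.isLt; omega⟩) :
    ∀ (i : Fin k) (j : Fin l), p i j = q i ⟨j, by have := j.isLt; omega⟩ := by
  intro i j
  have hj := j.isLt
  calc p i j = p i.rev j.rev := hp i j
    _ = q i.rev ⟨L - l + ↑(j.rev), by have := (j.rev).isLt; omega⟩ := hocc i.rev j.rev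
    _ = q i ⟨j, by omega⟩ := by
        rw [hq i ⟨j, by omega⟩]
        congr 1
        apply Fin.ext
        simp only [Fin.val_rev]
        omega

lemma hv_shift {A : Type*} {k l L : ℕ} (p : Fin k → Fin l → A) (q : Fin k → Fin L → A)
    (hp : IsHVPal p) (hq : IsHVPal q) (hl : l ≤ L)
    (hocc : ∀ (i : Fin k) (j : Fin l), p i j = q i ⟨L - l + j, by have := j.isLt; omega⟩) :
    ∀ (i : Fin k) (j : Fin l), p i j = q i ⟨j, by have := j.isLt; omega⟩ := by
  intro i j
  have hj := j.isLt
  calc p i j = p i j.rev := hp.1 i j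
    _ = q i ⟨L - l + ↑(j.rev), by have := (j.rev).isLt; omega⟩ := hocc i j.rev
    _ = q i ⟨j, by omega⟩ := by
        rw [hq.1 i ⟨j, by omega⟩]
        congr 1
        apply Fin.ext
        simp only [Fin.val_rev]
        omega

/-- appending a single column `c` to a 2D word `w` of size `(m,n)`,
`m,n ≥ 2`, creates at most `m(m+1)/2` new distinct 2D palindromic factors, and likewise
at most `m(m+1)/2` new distinct HV-palindromic factors. -/
theorem stmt_13 {A : Type*} (m n : ℕ) (hm : 2 ≤ m) (hn : 2 ≤ n)
    (w : Fin m → Fin n → A) (c : Fin m → Fin 1 → A) :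
    ({p : Word2D A | p ∈ PalFactors (hcat w c) ∧ ¬ IsFactor p.2.2 w}).ncard
        ≤ m * (m + 1) / 2 ∧
    ({p : Word2D A | p ∈ HVFactors (hcat w c) ∧ ¬ IsFactor p.2.2 w}).ncard
        ≤ m * (m + 1) / 2 := by
  constructor
  · exact main_bound m n hm w c (fun {k l} => @IsPal2D A k l)
      (fun p q hp hq hl hocc => pal2d_shift p q hp hq hl hocc)
  · exact main_bound m n hm w c (fun {k l} => @IsHVPal A k l)
      (fun p q hp hq hl hocc => hv_shift p q hp hq hl hocc)
end

section
/- Let n ≥ 2. Every HV-palindrome w of size (3,n) has at most 3n distinct nonempty HV-palindromic factors; moreover, for distinct letters a ≠ b, the word a^n ⊖ b^n ⊖ a^n of size (3,n) (first and third rows constant a, middle row constant b) is an HV-palindrome with exactly 3n distinct nonempty HV-palindromic factors. -/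
/-!
Rows 0 and 2 of a `3 × n` HV-palindrome `w` coincide. Hence an HV-palindromic factor with one
row is a palindromic factor of the top row `u` or of the middle row `v`; one with two rows has
two equal rows, so its row is a palindromic factor of both `u` and `v`; and one with three rows
is determined by its top two rows, a palindromic factor of the word `zip u v` over `A × A`.
A word of length `n` has at most `n` nonempty palindromic factors, since putting a letter in
front creates at most one new palindrome. Together this gives
`|Pal u ∪ Pal v| + |Pal u ∩ Pal v| + |Pal (zip u v)| ≤ 3n`.
The HV-palindromic factors of `aⁿ ⊖ bⁿ ⊖ aⁿ` are exactly `aˡ`, `bˡ` and `aˡ ⊖ bˡ ⊖ aˡ`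
for `1 ≤ l ≤ n`.
-/

namespace List
variable {α : Type*}

def palFactors (s : List α) : Set (List α) := {p | p ≠ [] ∧ p.Palindrome ∧ p <:+: s}

theorem finite_palFactors (s : List α) : (palFactors s).Finite :=
  s.sublists.finite_toSet.subset fun _ hp => mem_sublists.2 hp.2.2.sublist

theorem IsSuffix.suffix_tail_of_length_lt {p q : List α} (h : p <:+ q)
    (hlt : p.length < q.length) : p <:+ q.tail := by
  cases q with
  | nil => simp at hlt
  | cons y q =>
    rcases suffix_cons_iff.1 h with rfl | h
    · simp at hlt
    · exact h

/-- The shorter palindrome is a prefix, hence by symmetry a proper suffix, of the longer one. -/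
theorem Palindrome.infix_of_prefix_of_length_lt {x : α} {s p q : List α} (hp : p.Palindrome)
    (hq : q.Palindrome) (hps : p <+: x :: s) (hqs : q <+: x :: s)
    (hlt : p.length < q.length) : p <:+: s := by
  have hpq : p <:+ q := by
    rw [← hp.reverse_eq, ← hq.reverse_eq, reverse_suffix]
    exact prefix_of_prefix_length_le hps hqs hlt.le
  obtain rfl | ⟨t, rfl, ht⟩ := prefix_cons_iff.1 hqs
  · simp at hlt
  · exact ((hpq.suffix_tail_of_length_lt hlt).isInfix).trans ht.isInfix

theorem ncard_palFactors_cons_le (x : α) (s : List α) :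
    (palFactors (x :: s)).ncard ≤ (palFactors s).ncard + 1 := by
  set new := {p | p ∈ palFactors (x :: s) ∧ ¬ p <:+: s}
  have hsub : palFactors (x :: s) ⊆ palFactors s ∪ new := by
    intro p hp
    by_cases h : p <:+: s
    · exact Or.inl ⟨hp.1, hp.2.1, h⟩
    · exact Or.inr ⟨hp, h⟩
  have hfin : new.Finite := (finite_palFactors _).subset fun _ hp => hp.1
  have hnew : new.ncard ≤ 1 := by
    rw [Set.ncard_le_one_iff hfin]
    intro p q ⟨⟨_, hp, hpi⟩, hpn⟩ ⟨⟨_, hq, hqi⟩, hqn⟩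
    have hpre : ∀ {r : List α}, r <:+: x :: s → ¬ r <:+: s → r <+: x :: s := fun hr hrn =>
      (infix_cons_iff.1 hr).resolve_right hrn
    rcases lt_trichotomy p.length q.length with h | h | h
    · exact absurd (hp.infix_of_prefix_of_length_lt hq (hpre hpi hpn) (hpre hqi hqn) h) hpn
    · exact prefix_of_prefix_length_le (hpre hpi hpn) (hpre hqi hqn) h.le |>.eq_of_length h
    · exact absurd (hq.infix_of_prefix_of_length_lt hp (hpre hqi hqn) (hpre hpi hpn) h) hqn
  calc (palFactors (x :: s)).ncard ≤ (palFactors s ∪ new).ncard :=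
        Set.ncard_le_ncard hsub ((finite_palFactors s).union hfin)
    _ ≤ (palFactors s).ncard + new.ncard := Set.ncard_union_le _ _
    _ ≤ (palFactors s).ncard + 1 := by omega

theorem ncard_palFactors_le_length (s : List α) : (palFactors s).ncard ≤ s.length := by
  induction s with
  | nil =>
    have : palFactors ([] : List α) = ∅ :=
      Set.eq_empty_of_forall_notMem fun p hp => hp.1 (eq_nil_of_infix_nil hp.2.2)
    simp [this]
  | cons x s ih => simpa using (ncard_palFactors_cons_le x s).trans (by omega)

theorem ofFn_infix_ofFn {n l c : ℕ} (f : Fin n → α) (g : Fin l → α) (hc : c + l ≤ n)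
    (hg : ∀ j : Fin l, g j = f ⟨c + j, by omega⟩) : ofFn g <:+: ofFn f := by
  have : ofFn g = ((ofFn f).drop c).take l :=
    ext_getElem (by simp; omega) fun i _ _ => by simp [hg]
  exact this ▸ (take_prefix _ _).isInfix.trans (drop_suffix _ _).isInfix

theorem ofFn_mem_palFactors {n l c : ℕ} (f : Fin n → α) (g : Fin l → α) (hl : 0 < l)
    (hc : c + l ≤ n) (hpal : ∀ j, g j = g j.rev) (hg : ∀ j : Fin l, g j = f ⟨c + j, by omega⟩) :
    ofFn g ∈ palFactors (ofFn f) :=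
  ⟨by simp; omega, palindrome_ofFn hpal, ofFn_infix_ofFn f g hc hg⟩

end List

section

open List

variable {A : Type*}

theorem IsHVPal.row_eq_row_rev {m n : ℕ} {w : Fin m → Fin n → A} (hw : IsHVPal w) (i : Fin m) :
    w i = w i.rev :=
  funext (hw.2 i)

theorem IsHVPal.ext_of_upper_rows {k l : ℕ} {f g : Fin k → Fin l → A} (hf : IsHVPal f)
    (hg : IsHVPal g) (h : ∀ i : Fin k, 2 * i < k → f i = g i) : f = g := by
  funext i
  by_cases hi : 2 * i < k
  · rw [h i hi]
  · rw [hf.row_eq_row_rev, hg.row_eq_row_rev, h i.rev (by simp only [Fin.val_rev]; omega)]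

theorem IsHVPal.rows_of_three {n : ℕ} {w : Fin 3 → Fin n → A} (hw : IsHVPal w) (i : Fin 3) :
    w i = w 0 ∨ w i = w 1 := by
  fin_cases i
  · exact Or.inl rfl
  · exact Or.inr rfl
  · exact Or.inl (hw.row_eq_row_rev 0).symm

theorem mk_mem_hvFactors {k l m n : ℕ} {f : Fin k → Fin l → A} {w : Fin m → Fin n → A} :
    (⟨k, l, f⟩ : Word2D A) ∈ HVFactors w ↔ 0 < k ∧ 0 < l ∧ IsHVPal f ∧ IsFactor f w :=
  Iff.rfl

namespace Word2D

theorem mk_inj {k l : ℕ} {f g : Fin k → Fin l → A} :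
    (⟨k, l, f⟩ : Word2D A) = ⟨k, l, g⟩ ↔ f = g := by
  simp

def topRow (q : Word2D A) : List A :=
  if h : 0 < q.1 then ofFn (q.2.2 ⟨0, h⟩) else []

def topTwoRows (q : Word2D A) : List (A × A) :=
  if h : 1 < q.1 then ofFn fun j => (q.2.2 ⟨0, by omega⟩ j, q.2.2 ⟨1, h⟩ j) else []

theorem topRow_injOn {k : ℕ} (hk₀ : 0 < k) (hk : k ≤ 2) :
    Set.InjOn topRow {q : Word2D A | q.1 = k ∧ IsHVPal q.2.2} := by
  rintro ⟨k₁, l, f⟩ ⟨h₁, hf⟩ ⟨k₂, l', g⟩ ⟨h₂, hg⟩ h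
  dsimp only at h₁ h₂ hf hg
  subst h₁ h₂
  simp only [topRow, dif_pos hk₀] at h
  obtain rfl : l = l' := by simpa using congrArg length h
  rw [hf.ext_of_upper_rows hg fun i hi => ?_]
  obtain rfl : i = ⟨0, hk₀⟩ := Fin.ext (show (i : ℕ) = 0 by omega)
  exact ofFn_injective h

theorem topTwoRows_injOn : Set.InjOn topTwoRows {q : Word2D A | q.1 = 3 ∧ IsHVPal q.2.2} := by
  rintro ⟨k₁, l, f⟩ ⟨h₁, hf⟩ ⟨k₂, l', g⟩ ⟨h₂, hg⟩ h
  dsimp only at h₁ h₂ hf hg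
  subst h₁ h₂
  simp only [topTwoRows, dif_pos (show 1 < 3 by omega)] at h
  obtain rfl : l = l' := by simpa using congrArg length h
  have hrows := congrFun (ofFn_injective h)
  rw [hf.ext_of_upper_rows hg fun i hi => funext fun j => ?_]
  obtain rfl | rfl : i = 0 ∨ i = 1 := by omega
  · exact congrArg Prod.fst (hrows j)
  · exact congrArg Prod.snd (hrows j)

end Word2D

section ThreeRows

variable {n : ℕ} {w : Fin 3 → Fin n → A} {q : Word2D A}

theorem topRow_mem_of_height_one (hw : IsHVPal w) (hq : q ∈ HVFactors w) (h1 : q.1 = 1) :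
    q.topRow ∈ palFactors (ofFn (w 0)) ∪ palFactors (ofFn (w 1)) := by
  obtain ⟨k, l, f⟩ := q
  obtain ⟨-, hl, hf, r, c, hr, hc, hfac⟩ := hq
  dsimp only at h1 hl hf hfac hr hc
  subst h1
  have hmem := ofFn_mem_palFactors (w ⟨r, by omega⟩) (f 0) hl hc (hf.1 0) (hfac 0)
  simp only [Word2D.topRow, dif_pos one_pos]
  rcases hw.rows_of_three ⟨r, by omega⟩ with h | h <;> rw [h] at hmem
  · exact Or.inl hmem
  · exact Or.inr hmem

theorem topRow_mem_of_height_two (hw : IsHVPal w) (hq : q ∈ HVFactors w) (h2 : q.1 = 2) :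
    q.topRow ∈ palFactors (ofFn (w 0)) ∩ palFactors (ofFn (w 1)) := by
  obtain ⟨k, l, f⟩ := q
  obtain ⟨-, hl, hf, r, c, hr, hc, hfac⟩ := hq
  dsimp only at h2 hl hf hfac hr hc
  subst h2
  have hrows (i : Fin 2) : f i = f 0 := by
    fin_cases i
    · rfl
    · exact (hf.row_eq_row_rev 0).symm
  have hmem (i : Fin 2) := ofFn_mem_palFactors (w ⟨r + i, by omega⟩) (f 0) hl hc (hf.1 0)
    fun j => hrows i ▸ hfac i j
  simp only [Word2D.topRow, dif_pos two_pos]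
  obtain rfl | rfl : r = 0 ∨ r = 1 := by omega
  · exact ⟨hmem 0, hmem 1⟩
  · exact ⟨hw.row_eq_row_rev 0 ▸ hmem 1, hmem 0⟩

theorem topTwoRows_mem_of_height_three (hq : q ∈ HVFactors w) (h3 : q.1 = 3) :
    q.topTwoRows ∈ palFactors (ofFn fun j => (w 0 j, w 1 j)) := by
  obtain ⟨k, l, f⟩ := q
  obtain ⟨-, hl, hf, r, c, hr, hc, hfac⟩ := hq
  dsimp only at h3 hl hf hfac hr hc
  subst h3
  obtain rfl : r = 0 := by omega
  simp only [Word2D.topTwoRows, dif_pos (show 1 < 3 by omega)]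
  exact ofFn_mem_palFactors _ _ hl hc (fun j => Prod.ext (hf.1 _ j) (hf.1 _ j))
    fun j => Prod.ext (hfac _ j) (hfac _ j)

theorem ncard_hvFactors_le_three_mul (hw : IsHVPal w) : (HVFactors w).ncard ≤ 3 * n := by
  set u := ofFn (w 0)
  set v := ofFn (w 1)
  set z := ofFn fun j => (w 0 j, w 1 j)
  let S (k : ℕ) : Set (Word2D A) := {q | q ∈ HVFactors w ∧ q.1 = k}
  have hS (k : ℕ) : S k ⊆ {q : Word2D A | q.1 = k ∧ IsHVPal q.2.2} :=
    fun q hq => ⟨hq.2, hq.1.2.2.1⟩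
  have h1 : (S 1).ncard ≤ (palFactors u ∪ palFactors v).ncard :=
    Set.ncard_le_ncard_of_injOn _ (fun q hq => topRow_mem_of_height_one hw hq.1 hq.2)
      ((Word2D.topRow_injOn one_pos one_le_two).mono (hS 1))
      ((finite_palFactors _).union (finite_palFactors _))
  have h2 : (S 2).ncard ≤ (palFactors u ∩ palFactors v).ncard :=
    Set.ncard_le_ncard_of_injOn _ (fun q hq => topRow_mem_of_height_two hw hq.1 hq.2)
      ((Word2D.topRow_injOn two_pos le_rfl).mono (hS 2))
      ((finite_palFactors _).inter_of_left _)
  have h3 : (S 3).ncard ≤ (palFactors z).ncard :=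
    Set.ncard_le_ncard_of_injOn _ (fun q hq => topTwoRows_mem_of_height_three hq.1 hq.2)
      (Word2D.topTwoRows_injOn.mono (hS 3)) (finite_palFactors _)
  have hsplit : HVFactors w = S 1 ∪ S 2 ∪ S 3 := by
    refine subset_antisymm (fun q hq => ?_) (by rintro q ((hq | hq) | hq) <;> exact hq.1)
    have hk : 0 < q.1 := hq.1
    obtain ⟨r, -, hr, -⟩ := hq.2.2.2
    obtain h | h | h : q.1 = 1 ∨ q.1 = 2 ∨ q.1 = 3 := by omega
    exacts [Or.inl (Or.inl ⟨hq, h⟩), Or.inl (Or.inr ⟨hq, h⟩), Or.inr ⟨hq, h⟩]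
  have hlen {β : Type _} (f : Fin n → β) : (palFactors (ofFn f)).ncard ≤ n := by
    simpa using ncard_palFactors_le_length (ofFn f)
  calc (HVFactors w).ncard ≤ (S 1).ncard + (S 2).ncard + (S 3).ncard := by
        rw [hsplit]
        exact (Set.ncard_union_le _ _).trans (by gcongr; exact Set.ncard_union_le _ _)
    _ ≤ (palFactors u ∪ palFactors v).ncard + (palFactors u ∩ palFactors v).ncard
          + (palFactors z).ncard := by gcongr
    _ = (palFactors u).ncard + (palFactors v).ncard + (palFactors z).ncard := by
        rw [Set.ncard_union_add_ncard_inter _ _ (finite_palFactors _) (finite_palFactors _)]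
    _ ≤ 3 * n := by linarith [hlen (w 0), hlen (w 1), hlen fun j => (w 0 j, w 1 j)]

end ThreeRows

section Stripes

variable {n : ℕ} {a b : A}

def abaWord (a b : A) (m : ℕ) : Fin 3 → Fin m → A := fun i _ => if i = 1 then b else a

theorem abaWord_mk {m x : ℕ} (hx : x < 3) (j : Fin m) :
    abaWord a b m ⟨x, hx⟩ j = if x = 1 then b else a := by
  simp [abaWord, Fin.ext_iff]

theorem isHVPal_abaWord (a b : A) (m : ℕ) : IsHVPal (abaWord a b m) :=
  ⟨fun _ _ => rfl, fun i _ => by fin_cases i <;> rfl⟩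

def abaFactor (a b : A) (l : ℕ) : Fin 3 → Word2D A :=
  ![⟨1, l, fun _ _ => a⟩, ⟨1, l, fun _ _ => b⟩, ⟨3, l, abaWord a b l⟩]

theorem abaFactor_mem_hvFactors {l : ℕ} (hl : 0 < l) (hln : l ≤ n) (t : Fin 3) :
    abaFactor a b l t ∈ HVFactors (abaWord a b n) := by
  have hconst (x : A) : IsHVPal fun (_ : Fin 1) (_ : Fin l) => x := ⟨fun _ _ => rfl, fun _ _ => rfl⟩
  fin_cases t
  · exact mk_mem_hvFactors.2 ⟨one_pos, hl, hconst a, 0, 0, by omega, by omega,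
      fun _ _ => by simp [abaWord]⟩
  · exact mk_mem_hvFactors.2 ⟨one_pos, hl, hconst b, 1, 0, by omega, by omega,
      fun _ _ => by simp [abaWord]⟩
  · exact mk_mem_hvFactors.2 ⟨by norm_num, hl, isHVPal_abaWord a b l, 0, 0, le_rfl, by omega,
      fun _ _ => by simp [abaWord, Fin.ext_iff]⟩

/-- A two-row factor would have a column `(a, b)` or `(b, a)`, which is no palindrome. -/
theorem exists_abaFactor_of_mem_hvFactors (hab : a ≠ b) {q : Word2D A}
    (hq : q ∈ HVFactors (abaWord a b n)) : ∃ l ∈ Set.Icc 1 n, ∃ t, abaFactor a b l t = q := by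
  obtain ⟨k, l, f⟩ := q
  obtain ⟨hk, hl, hf, r, c, hr, hc, hfac⟩ := hq
  dsimp only at hk hl hf hfac hr hc
  simp only [abaWord_mk] at hfac
  refine ⟨l, ⟨hl, by omega⟩, ?_⟩
  obtain rfl | rfl | rfl : k = 1 ∨ k = 2 ∨ k = 3 := by omega
  · by_cases hr1 : r = 1
    · obtain rfl : f = fun _ _ => b := funext₂ fun i j => by simp [hfac, hr1]
      exact ⟨1, rfl⟩
    · obtain rfl : f = fun _ _ => a := funext₂ fun i j => by simp [hfac, hr1]
      exact ⟨0, rfl⟩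
  · have hcol : f 0 ⟨0, hl⟩ = f 1 ⟨0, hl⟩ := hf.2 0 _
    obtain rfl | rfl : r = 0 ∨ r = 1 := by omega
    all_goals simp [hfac, hab, hab.symm] at hcol
  · obtain rfl : r = 0 := by omega
    obtain rfl : f = abaWord a b l := funext₂ fun i j => by simp [hfac, abaWord, Fin.ext_iff]
    exact ⟨2, rfl⟩

theorem hvFactors_abaWord (hab : a ≠ b) :
    HVFactors (abaWord a b n) =
      (fun x : ℕ × Fin 3 => abaFactor a b x.1 x.2) '' Set.Icc 1 n ×ˢ Set.univ := by
  ext q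
  constructor
  · intro hq
    obtain ⟨l, hl, t, rfl⟩ := exists_abaFactor_of_mem_hvFactors hab hq
    exact ⟨(l, t), ⟨hl, trivial⟩, rfl⟩
  · rintro ⟨⟨l, t⟩, ⟨⟨hl, hln⟩, -⟩, rfl⟩
    exact abaFactor_mem_hvFactors hl hln t

theorem abaFactor_injOn (hab : a ≠ b) :
    Set.InjOn (fun x : ℕ × Fin 3 => abaFactor a b x.1 x.2) (Set.Icc 1 n ×ˢ Set.univ) := by
  rintro ⟨l, t⟩ ⟨⟨hl, -⟩, -⟩ ⟨l', t'⟩ - h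
  dsimp only at h
  obtain rfl : l = l' := by
    fin_cases t <;> fin_cases t' <;> exact congrArg (fun q : Word2D A => q.2.1) h
  have hletter {x y : A} (h : (⟨1, l, fun _ _ => x⟩ : Word2D A) = ⟨1, l, fun _ _ => y⟩) :
      x = y :=
    congrFun (congrFun (Word2D.mk_inj.1 h) 0) ⟨0, hl⟩
  fin_cases t <;> fin_cases t' <;> simp only [abaFactor, Fin.isValue, Fin.zero_eta, Fin.mk_one,
    Fin.reduceFinMk, Matrix.cons_val] at h ⊢
  all_goals first
    | rfl
    | exact absurd (hletter h) hab
    | exact absurd (hletter h).symm hab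
    | exact absurd (congrArg Sigma.fst h : (_ : ℕ) = _) (by norm_num)

theorem ncard_hvFactors_abaWord (hab : a ≠ b) : (HVFactors (abaWord a b n)).ncard = 3 * n := by
  rw [hvFactors_abaWord hab, (abaFactor_injOn hab).ncard_image, Set.ncard_prod]
  simp [mul_comm]

end Stripes

end

theorem stmt_17_general {A : Type*} (n : ℕ) :
    (∀ w : Fin 3 → Fin n → A, IsHVPal w → (HVFactors w).ncard ≤ 3 * n) ∧
    (∀ a b : A, a ≠ b →
      IsHVPal (fun (i : Fin 3) (_ : Fin n) => if i = 1 then b else a) ∧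
      (HVFactors (fun (i : Fin 3) (_ : Fin n) => if i = 1 then b else a)).ncard
        = 3 * n) :=
  ⟨fun _ hw => ncard_hvFactors_le_three_mul hw,
    fun a b hab => ⟨isHVPal_abaWord a b n, ncard_hvFactors_abaWord hab⟩⟩

/-- every HV-palindrome of size `(3,n)`, `n ≥ 2`, has at most `3n` distinct
nonempty HV-palindromic factors, and for distinct letters `a ≠ b`, the word
`aⁿ ⊖ bⁿ ⊖ aⁿ` is an HV-palindrome achieving exactly `3n`. -/
theorem stmt_17 {A : Type*} (n : ℕ) (hn : 2 ≤ n) :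
    (∀ w : Fin 3 → Fin n → A, IsHVPal w → (HVFactors w).ncard ≤ 3 * n) ∧
    (∀ a b : A, a ≠ b →
      IsHVPal (fun (i : Fin 3) (_ : Fin n) => if i = 1 then b else a) ∧
      (HVFactors (fun (i : Fin 3) (_ : Fin n) => if i = 1 then b else a)).ncard
        = 3 * n) :=
  stmt_17_general n
end

section
/- Let w : ℕ × ℕ → Σ be an infinite 2D word whose set of occurring letters Alph(w) has exactly 2 elements. Then w has at least 14 distinct nonempty HV-palindromic factors. -/
/-- `p` is a factor of the infinite 2D word `w : ℕ → ℕ → A`. -/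
def IsFactorInf {A : Type*} {k l : ℕ} (p : Fin k → Fin l → A) (w : ℕ → ℕ → A) : Prop :=
  ∃ r c, ∀ (i : Fin k) (j : Fin l), p i j = w (r + i) (c + j)

/-- The set of distinct nonempty HV-palindromic factors of the infinite 2D word `w`. -/
def HVFactorsInf {A : Type*} (w : ℕ → ℕ → A) : Set (Word2D A) :=
  {p | 0 < p.1 ∧ 0 < p.2.1 ∧ IsHVPal p.2.2 ∧ IsFactorInf p.2.2 w}

/-- The set of letters occurring in the infinite 2D word `w`. -/
def Alph {A : Type*} (w : ℕ → ℕ → A) : Set A :=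
  Set.range fun pr : ℕ × ℕ => w pr.1 pr.2

namespace Stmt18

/-! ### The decidable core: every binary word of length 9 has ≥ 8 palindromic factors -/

def allB : ℕ → List (List Bool)
  | 0 => [[]]
  | n+1 => (allB n).flatMap (fun L => [false :: L, true :: L])

def pairsL : List (ℕ × ℕ) :=
  (List.range 9).flatMap (fun s => (List.range (9 - s)).map (fun l => (s, l + 1)))

def facs (L : List Bool) : List (List Bool) :=
  (pairsL.map (fun sl => (L.drop sl.1).take sl.2)).filter (fun f => f.reverse == f)

set_option maxHeartbeats 4000000 in
set_option maxRecDepth 20000 in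
lemma coreL : ∀ L ∈ allB 9, 8 ≤ (facs L).dedup.length := by decide

lemma mem_allB : ∀ (n : ℕ) (L : List Bool), L.length = n → L ∈ allB n := by
  intro n
  induction n with
  | zero => intro L h; simp [allB, List.length_eq_zero_iff.mp h]
  | succ n ih =>
    intro L h
    cases L with
    | nil => simp at h
    | cons x L' =>
      have hL' := ih L' (by simpa using h)
      cases x <;>
      · show _ ∈ (allB n).flatMap _
        exact List.mem_flatMap.mpr ⟨L', hL', by simp⟩

/-! ### Bridging to functions -/

def get9 (v : Fin 9 → Bool) (n : ℕ) : Bool := if h : n < 9 then v ⟨n, h⟩ else false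

def fctB (v : Fin 9 → Bool) (sl : ℕ × ℕ) : List Bool :=
  List.ofFn (fun j : Fin sl.2 => get9 v (sl.1 + j))

lemma dropTake (v : Fin 9 → Bool) (s l : ℕ) (h : s + l ≤ 9) :
    ((List.ofFn v).drop s).take l = fctB v (s, l) := by
  apply List.ext_getElem
  · simp [fctB]; omega
  · intro i h1 h2
    have hi : s + i < 9 := by
      simp only [List.length_take, List.length_drop, List.length_ofFn] at h1
      omega
    simp only [fctB, List.getElem_take, List.getElem_drop, List.getElem_ofFn, get9, dif_pos hi]

variable {A : Type*}

open Classical in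
noncomputable def enc (a x : A) : Bool := if x = a then true else false

def fctA (u : ℕ → A) (sl : ℕ × ℕ) : List A := List.ofFn (fun j : Fin sl.2 => u (sl.1 + j))

lemma map_inj_list {P : A → Prop} (g : A → Bool)
    (hg : ∀ x y, P x → P y → g x = g y → x = y) :
    ∀ (L1 L2 : List A), (∀ x ∈ L1, P x) → (∀ x ∈ L2, P x) →
      L1.map g = L2.map g → L1 = L2 := by
  intro L1
  induction L1 with
  | nil => intro L2 _ _ h; cases L2 <;> simp_all
  | cons x L ih =>
    intro L2 h1 h2 h
    cases L2 with
    | nil => simp at h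
    | cons y L' =>
      simp only [List.map_cons, List.cons.injEq] at h
      have hx : x = y := hg _ _ (h1 x (by simp)) (h2 y (by simp)) h.1
      have := ih L' (fun z hz => h1 z (by simp [hz])) (fun z hz => h2 z (by simp [hz])) h.2
      rw [hx, this]

lemma palOfFn {l : ℕ} (g : Fin l → A) (h : (List.ofFn g).reverse = List.ofFn g) :
    ∀ j : Fin l, g j = g j.rev := by
  intro j
  have hj : (j : ℕ) < (List.ofFn g).length := by simp [j.isLt]
  have hj2 : (j : ℕ) < (List.ofFn g).reverse.length := by simpa using hj
  have h1 : (List.ofFn g).reverse[(j : ℕ)] = (List.ofFn g)[(j : ℕ)] := by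
    exact List.getElem_of_eq h _
  rw [List.getElem_reverse] at h1
  simp only [List.getElem_ofFn, List.length_ofFn] at h1
  have : j.rev = ⟨l - 1 - j, by omega⟩ := by
    apply Fin.ext
    simp [Fin.val_rev]
    omega
  rw [this]
  exact h1.symm

/-- The 1D lemma: any binary infinite word has at least 8 palindromic factors. -/
lemma oneD (u : ℕ → A) (a b : A) (hab : a ≠ b) (hu : ∀ n, u n = a ∨ u n = b) :
    ∃ T : Finset ((l : ℕ) × (Fin l → A)), 8 ≤ T.card ∧
      ∀ q ∈ T, 0 < q.1 ∧ (∀ j : Fin q.1, q.2 j = q.2 j.rev) ∧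
        ∃ s : ℕ, ∀ j : Fin q.1, q.2 j = u (s + j) := by
  classical
  set v : Fin 9 → Bool := fun j => enc a (u j) with hv
  set pairs9 : Finset (ℕ × ℕ) :=
    (Finset.range 9 ×ˢ Finset.range 10).filter (fun sl => 1 ≤ sl.2 ∧ sl.1 + sl.2 ≤ 9) with hp9
  set TPal : Finset (ℕ × ℕ) :=
    pairs9.filter (fun sl => (fctA u sl).reverse = fctA u sl) with hTP
  refine ⟨TPal.image (fun sl => (⟨sl.2, fun j => u (sl.1 + j)⟩ : (l : ℕ) × (Fin l → A))), ?_, ?_⟩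
  · -- cardinality
    have hmap : ∀ sl : ℕ × ℕ, sl.1 + sl.2 ≤ 9 →
        (fctA u sl).map (enc a) = fctB v sl := by
      intro sl hsl
      simp only [fctA, fctB, List.map_ofFn]
      congr 1
      funext j
      simp only [Function.comp_apply, get9, hv]
      rw [dif_pos (by omega : sl.1 + (j : ℕ) < 9)]
    have hcore : 8 ≤ (facs (List.ofFn v)).toFinset.card := by
      rw [List.card_toFinset]
      exact coreL _ (mem_allB 9 _ (by simp))
    have hsub : (facs (List.ofFn v)).toFinset ⊆
        ((TPal.image (fun sl => (⟨sl.2, fun j => u (sl.1 + j)⟩ : (l : ℕ) × (Fin l → A)))).image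
          (fun q => List.ofFn q.2)).image (List.map (enc a)) := by
      intro f hf
      simp only [List.mem_toFinset, facs, List.mem_filter, List.mem_map] at hf
      obtain ⟨⟨sl, hsl, hfeq⟩, hpal⟩ := hf
      simp only [pairsL, List.mem_flatMap, List.mem_map, List.mem_range] at hsl
      obtain ⟨s, hs, l, hl, hsleq⟩ := hsl
      subst hsleq
      have hle : s + (l + 1) ≤ 9 := by omega
      rw [dropTake v s (l+1) hle] at hfeq
      have hpal' : f.reverse = f := by simpa using hpal
      -- A-side palindromicity
      have hmem : ∀ x ∈ fctA u (s, l+1), x = a ∨ x = b := by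
        intro x hx
        simp only [fctA, List.mem_ofFn, Set.mem_range] at hx
        obtain ⟨j, hj⟩ := hx
        rw [← hj]; exact hu _
      have hApal : (fctA u (s, l+1)).reverse = fctA u (s, l+1) := by
        apply map_inj_list (P := fun x => x = a ∨ x = b) (enc a)
        · intro x y hx hy hxy
          rcases hx with rfl | rfl <;> rcases hy with rfl | rfl <;>
            simp [enc, hab] at hxy ⊢ <;> tauto
        · intro x hx; exact hmem x (List.mem_reverse.mp hx)
        · exact hmem
        · rw [List.map_reverse, hmap (s, l+1) hle, hfeq]
          exact hpal'
      have hTPmem : (s, l+1) ∈ TPal := by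
        rw [hTP, Finset.mem_filter, hp9, Finset.mem_filter]
        exact ⟨⟨Finset.mem_product.mpr
          ⟨Finset.mem_range.mpr (by omega), Finset.mem_range.mpr (by omega)⟩,
          Nat.le_add_left 1 l, hle⟩, hApal⟩
      have hm1 : (⟨l+1, fun j => u (s + (j : ℕ))⟩ : (l : ℕ) × (Fin l → A)) ∈
          TPal.image (fun sl => (⟨sl.2, fun j => u (sl.1 + (j : ℕ))⟩ : (l : ℕ) × (Fin l → A))) :=
        Finset.mem_image_of_mem _ hTPmem
      have hm2 := Finset.mem_image_of_mem (fun q => List.ofFn q.2) hm1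
      have hm3 := Finset.mem_image_of_mem (List.map (enc a)) hm2
      have hfin : List.map (enc a) (List.ofFn fun j : Fin (l+1) => u (s + (j : ℕ))) = f := by
        rw [show (List.ofFn fun j : Fin (l+1) => u (s + (j : ℕ))) = fctA u (s, l+1) from rfl,
          hmap (s, l+1) hle, hfeq]
      rw [hfin] at hm3
      exact hm3
    calc (8 : ℕ) ≤ (facs (List.ofFn v)).toFinset.card := hcore
      _ ≤ _ := Finset.card_le_card hsub
      _ ≤ _ := Finset.card_image_le
      _ ≤ _ := Finset.card_image_le
  · -- properties
    intro q hq
    simp only [Finset.mem_image] at hq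
    obtain ⟨sl, hsl, rfl⟩ := hq
    rw [hTP, Finset.mem_filter, hp9, Finset.mem_filter] at hsl
    obtain ⟨⟨_, h1, _⟩, hApal⟩ := hsl
    exact ⟨h1, palOfFn _ hApal, sl.1, fun j => rfl⟩



def rowify (q : (l : ℕ) × (Fin l → A)) : Word2D A := ⟨1, q.1, fun _ j => q.2 j⟩

def colify (q : (l : ℕ) × (Fin l → A)) : Word2D A := ⟨q.1, 1, fun i _ => q.2 i⟩

lemma rowify_inj : Function.Injective (rowify (A := A)) := by
  rintro ⟨l, f⟩ ⟨l', f'⟩ h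
  have h1 : l = l' := congrArg (fun p : Word2D A => p.2.1) h
  subst h1
  have h3 := (Sigma.mk.inj_iff.mp h).2
  have h4 := (Sigma.mk.inj_iff.mp (eq_of_heq h3)).2
  have h5 := eq_of_heq h4
  have h6 : f = f' := funext fun j => congrFun (congrFun h5 0) j
  rw [h6]

lemma colify_inj : Function.Injective (colify (A := A)) := by
  rintro ⟨l, f⟩ ⟨l', f'⟩ h
  have h1 : l = l' := congrArg (fun p : Word2D A => p.1) h
  subst h1
  have h3 := (Sigma.mk.inj_iff.mp h).2
  have h4 := (Sigma.mk.inj_iff.mp (eq_of_heq h3)).2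
  have h5 := eq_of_heq h4
  have h6 : f = f' := funext fun i => congrFun (congrFun h5 i) 0
  rw [h6]

end Stmt18

/-- an infinite 2D word over exactly two letters has at least `14` distinct
nonempty HV-palindromic factors. -/
theorem stmt_18 {A : Type*} (w : ℕ → ℕ → A) (halph : (Alph w).ncard = 2) :
    ∃ S : Finset (Word2D A), S.card = 14 ∧ ∀ p ∈ S, p ∈ HVFactorsInf w := by
  classical
  obtain ⟨a, b, hab, hA⟩ := Set.ncard_eq_two.mp halph
  have hl : ∀ i j : ℕ, w i j = a ∨ w i j = b := by
    intro i j
    have h : w i j ∈ Alph w := ⟨(i, j), rfl⟩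
    rw [hA] at h
    simpa using h
  obtain ⟨Tr, hTrc, hTr⟩ := Stmt18.oneD (fun j => w 0 j) a b hab (fun n => hl 0 n)
  obtain ⟨Tc, hTcc, hTc⟩ := Stmt18.oneD (fun i => w i 0) a b hab (fun n => hl n 0)
  set R := Tr.image Stmt18.rowify with hR
  set C := Tc.image Stmt18.colify with hC
  have hRcard : 8 ≤ R.card := by
    rw [hR, Finset.card_image_of_injective _ Stmt18.rowify_inj]; exact hTrc
  have hCcard : 8 ≤ C.card := by
    rw [hC, Finset.card_image_of_injective _ Stmt18.colify_inj]; exact hTcc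
  have hRmem : ∀ p ∈ R, p ∈ HVFactorsInf w := by
    intro p hp
    obtain ⟨⟨l, f⟩, hf, rfl⟩ := Finset.mem_image.mp hp
    obtain ⟨hpos, hpal, s, hs⟩ := hTr _ hf
    refine ⟨Nat.one_pos, hpos, ⟨fun i j => hpal j, fun i j => rfl⟩, 0, s, fun i j => ?_⟩
    have hi : (i : ℕ) = 0 := Nat.lt_one_iff.mp i.isLt
    rw [hi]
    show f j = w 0 (s + (j : ℕ))
    exact hs j
  have hCmem : ∀ p ∈ C, p ∈ HVFactorsInf w := by
    intro p hp
    obtain ⟨⟨l, f⟩, hf, rfl⟩ := Finset.mem_image.mp hp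
    obtain ⟨hpos, hpal, s, hs⟩ := hTc _ hf
    refine ⟨hpos, Nat.one_pos, ⟨fun i j => rfl, fun i j => hpal i⟩, s, 0, fun i j => ?_⟩
    have hj : (j : ℕ) = 0 := Nat.lt_one_iff.mp j.isLt
    rw [hj]
    show f i = w (s + (i : ℕ)) 0
    exact hs i
  have hint : R ∩ C ⊆
      {Stmt18.rowify ⟨1, fun _ => a⟩, Stmt18.rowify ⟨1, fun _ => b⟩} := by
    intro p hp
    obtain ⟨hpR, hpC⟩ := Finset.mem_inter.mp hp
    obtain ⟨⟨l, f⟩, hf, rfl⟩ := Finset.mem_image.mp hpR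
    obtain ⟨⟨k, g⟩, hg, hpc⟩ := Finset.mem_image.mp hpC
    have hl1 : l = 1 := by
      have h21 : (Stmt18.rowify ⟨l, f⟩).2.1 = 1 := by rw [← hpc]; exact rfl
      exact h21
    subst hl1
    obtain ⟨-, -, s, hs⟩ := hTr _ hf
    have hf0 : f 0 = w 0 (s + ((0 : Fin 1) : ℕ)) := hs 0
    rcases hl 0 (s + ((0 : Fin 1) : ℕ)) with hx | hx
    · apply Finset.mem_insert.mpr; left
      have hfa : f = fun _ : Fin 1 => a := funext fun j => by
        rw [Subsingleton.elim j 0, hf0, hx]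
      rw [hfa]
    · apply Finset.mem_insert.mpr; right
      apply Finset.mem_singleton.mpr
      have hfa : f = fun _ : Fin 1 => b := funext fun j => by
        rw [Subsingleton.elim j 0, hf0, hx]
      rw [hfa]
  have hintcard : (R ∩ C).card ≤ 2 := by
    refine le_trans (Finset.card_le_card hint) ?_
    refine le_trans (Finset.card_insert_le _ _) ?_
    simp
  have h14 : 14 ≤ (R ∪ C).card := by
    have huni := Finset.card_union_add_card_inter R C
    omega
  obtain ⟨S, hSsub, hScard⟩ := Finset.exists_subset_card_eq h14
  refine ⟨S, hScard, fun p hp => ?_⟩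
  rcases Finset.mem_union.mp (hSsub hp) with h | h
  · exact hRmem p h
  · exact hCmem p h
end
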